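/- arXiv:0909.2769 — 2 statements merged into one kernel-verified Lean document; each statement's English description precedes it below -/
import Mathlib

section
/- If the lexicographic product G[H] admits a fall coloring (for some k), then H admits a fall coloring (for some k'). Equivalently, if Fall(H) = ∅ then Fall(G[H]) = ∅. -/
open SimpleGraph

/-- A fall coloring: a proper coloring in which every vertex sees all colors
on its closed neighborhood. -/
def IsFallColoring {α : Type*} (G : SimpleGraph α) {k : ℕ} (f : α → Fin k) : Prop :=
  (∀ u v, G.Adj u v → f u ≠ f v) ∧
  (∀ v (c : Fin k), ∃ u, (u = v ∨ G.Adj v u) ∧ f u = c)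

/-- The set of positive integers `k` such that `G` has a fall `k`-coloring. -/
def Fall {α : Type*} (G : SimpleGraph α) : Set ℕ :=
  {k | 0 < k ∧ ∃ f : α → Fin k, IsFallColoring G f}

/-- The lexicographic product `G[H]`. -/
def lexProd {α β : Type*} (G : SimpleGraph α) (H : SimpleGraph β) : SimpleGraph (α × β) :=
  SimpleGraph.fromRel (fun p q => G.Adj p.1 q.1 ∨ (p.1 = q.1 ∧ H.Adj p.2 q.2))

/-- The categorical (tensor) product `G × H`. -/
def tensorProd {α β : Type*} (G : SimpleGraph α) (H : SimpleGraph β) : SimpleGraph (α × β) :=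
  SimpleGraph.fromRel (fun p q => G.Adj p.1 q.1 ∧ H.Adj p.2 q.2)

/-- A type-II graph homomorphism from `G` to `H`. -/
def IsTypeII {α β : Type*} (G : SimpleGraph α) (H : SimpleGraph β) (f : α → β) : Prop :=
  (∀ u v, G.Adj u v → H.Adj (f u) (f v)) ∧
  (∀ u₁ v₁, H.Adj u₁ v₁ → ∀ v, f v = v₁ → ∃ u, f u = u₁ ∧ G.Adj u v)

/-!
Fix a vertex `a` of `G` and restrict a fall coloring `f` of `G[H]` to the fiber `{a} × H`.
This restriction is proper on `H`. If `(a, y)` sees the color `f (a, z)` at a vertex `(a', u)`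
with `a ~ a'` in `G`, then `(a, z)` is adjacent to `(a', u)` as well, contradicting properness;
so `(a, y)` sees every color of the fiber inside the fiber. Renumbering the colors used on the
fiber gives a fall coloring of `H`.
-/

section lexProd

variable {α β : Type*} {G : SimpleGraph α} {H : SimpleGraph β}

theorem lexProd_adj_iff {p q : α × β} :
    (lexProd G H).Adj p q ↔ G.Adj p.1 q.1 ∨ (p.1 = q.1 ∧ H.Adj p.2 q.2) := by
  rw [lexProd, fromRel_adj]
  constructor
  · rintro ⟨-, h | h⟩
    · exact h
    · exact h.imp Adj.symm fun h ↦ ⟨h.1.symm, h.2.symm⟩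
  · intro h
    refine ⟨?_, Or.inl h⟩
    rintro rfl
    rcases h with h | h
    · exact h.ne rfl
    · exact h.2.ne rfl

theorem lexProd_adj_of_fst_adj {a a' : α} (y y' : β) (h : G.Adj a a') :
    (lexProd G H).Adj (a, y) (a', y') :=
  lexProd_adj_iff.2 (Or.inl h)

theorem lexProd_adj_of_snd_adj (a : α) {y y' : β} (h : H.Adj y y') :
    (lexProd G H).Adj (a, y) (a, y') :=
  lexProd_adj_iff.2 (Or.inr ⟨rfl, h⟩)

theorem IsFallColoring.exists_fiber_neighbor {k : ℕ} {f : α × β → Fin k}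
    (hf : IsFallColoring (lexProd G H) f) (a : α) (y z : β) :
    ∃ u, (u = y ∨ H.Adj y u) ∧ f (a, u) = f (a, z) := by
  obtain ⟨⟨a', u⟩, hw, hfw⟩ := hf.2 (a, y) (f (a, z))
  rcases hw with hw | hw
  · obtain ⟨rfl, rfl⟩ := Prod.mk.inj hw
    exact ⟨u, Or.inl rfl, hfw⟩
  rcases lexProd_adj_iff.1 hw with hG | ⟨rfl, hH⟩
  · exact absurd hfw.symm (hf.1 _ _ (lexProd_adj_of_fst_adj z u hG))
  · exact ⟨u, Or.inr hH, hfw⟩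

end lexProd

theorem one_mem_fall_of_isEmpty {β : Type*} [IsEmpty β] (H : SimpleGraph β) : 1 ∈ Fall H :=
  ⟨Nat.one_pos, isEmptyElim, ⟨fun u ↦ isEmptyElim u, fun v ↦ isEmptyElim v⟩⟩

theorem card_range_mem_fall {β γ : Type*} [Nonempty β] [Finite γ] {H : SimpleGraph β}
    (f : β → γ) (hproper : ∀ u v, H.Adj u v → f u ≠ f v)
    (hsees : ∀ v z, ∃ u, (u = v ∨ H.Adj v u) ∧ f u = f z) :
    Nat.card (Set.range f) ∈ Fall H := by
  let e : Set.range f ≃ Fin (Nat.card (Set.range f)) := Finite.equivFin _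
  refine ⟨Nat.card_pos, e ∘ Set.rangeFactorization f, ?_, ?_⟩
  · intro u v huv heq
    exact hproper u v huv (congrArg Subtype.val (e.injective heq))
  · intro v c
    obtain ⟨z, hz⟩ := (e.symm c).2
    obtain ⟨u, hu, hfu⟩ := hsees v z
    refine ⟨u, hu, ?_⟩
    rw [Function.comp_apply, ← e.eq_symm_apply]
    exact Subtype.ext (hfu.trans hz)

/-- if G[H] has a fall coloring then so does H. -/
theorem fall_lexProd_nonempty_imp {α β : Type*} [Nonempty α]
    (G : SimpleGraph α) (H : SimpleGraph β)
    (h : (Fall (lexProd G H)).Nonempty) : (Fall H).Nonempty := by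
  rcases isEmpty_or_nonempty β with hβ | hβ
  · exact ⟨1, one_mem_fall_of_isEmpty H⟩
  obtain ⟨k, -, f, hf⟩ := h
  obtain ⟨a⟩ := ‹Nonempty α›
  have hproper : ∀ u v, H.Adj u v → f (a, u) ≠ f (a, v) := fun u v huv ↦
    hf.1 _ _ (lexProd_adj_of_snd_adj a huv)
  exact ⟨_, card_range_mem_fall (fun y ↦ f (a, y)) hproper (hf.exists_fiber_neighbor a)⟩
end

section
/- Let G and H be graphs with Fall(G) ≠ ∅ and Fall(H) ≠ ∅. If s ∈ Fall(G) and k_1, …, k_s ∈ Fall(H), then k_1 + k_2 + ⋯ + k_s ∈ Fall(G[H]). In other words, { Σ_{i=1}^s k_i : s ∈ Fall(G), each k_i ∈ Fall(H) } ⊆ Fall(G[H]). -/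
/-!
Given a fall coloring `f` of `G` with colors `Fin s` and fall colorings `gᵢ` of `H` with `kᵢ`
colors, color `(x, y)` by `⟨f x, g_{f x} y⟩ : Σ i, Fin kᵢ`, a type with `∑ kᵢ` elements.
Adjacent vertices in different copies of `H` differ in the first coordinate, those in one copy
in the second. To see `⟨i, c⟩` from `(x, y)`, pick `x'` in the closed neighbourhood of `x` with
`f x' = i`, then `y'` in that of `y` with `gᵢ y' = c`: `(x', y')` is in the closed
neighbourhood of `(x, y)` in `G[H]`.
-/

open SimpleGraph

def IsFallMap {α γ : Type*} (G : SimpleGraph α) (c : α → γ) : Prop :=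
  (∀ u v, G.Adj u v → c u ≠ c v) ∧
  (∀ v x, ∃ u, (u = v ∨ G.Adj v u) ∧ c u = x)

theorem IsFallMap.equiv_comp {α γ δ : Type*} {G : SimpleGraph α} {c : α → γ}
    (hc : IsFallMap G c) (e : γ ≃ δ) : IsFallMap G (e ∘ c) := by
  refine ⟨fun u v huv => e.injective.ne (hc.1 u v huv), fun v x => ?_⟩
  obtain ⟨u, hu, hcu⟩ := hc.2 v (e.symm x)
  exact ⟨u, hu, by simp [hcu]⟩

theorem lexProd_adj {α β : Type*} {G : SimpleGraph α} {H : SimpleGraph β} {p q : α × β} :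
    (lexProd G H).Adj p q ↔ G.Adj p.1 q.1 ∨ (p.1 = q.1 ∧ H.Adj p.2 q.2) := by
  rw [lexProd, fromRel_adj]
  constructor
  · rintro ⟨-, (h | ⟨h₁, h₂⟩) | (h | ⟨h₁, h₂⟩)⟩
    exacts [Or.inl h, Or.inr ⟨h₁, h₂⟩, Or.inl h.symm, Or.inr ⟨h₁.symm, h₂.symm⟩]
  · rintro (h | ⟨h₁, h₂⟩)
    · exact ⟨fun e => h.ne (congrArg Prod.fst e), Or.inl (Or.inl h)⟩
    · exact ⟨fun e => h₂.ne (congrArg Prod.snd e), Or.inl (Or.inr ⟨h₁, h₂⟩)⟩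

theorem IsFallMap.lexProd_sigma {α β ι : Type*} {κ : ι → Type*} {G : SimpleGraph α}
    {H : SimpleGraph β} {f : α → ι} {g : ∀ i, β → κ i}
    (hf : IsFallMap G f) (hg : ∀ i, IsFallMap H (g i)) :
    IsFallMap (lexProd G H) (fun p => (⟨f p.1, g (f p.1) p.2⟩ : Σ i, κ i)) := by
  constructor
  · rintro ⟨x, y⟩ ⟨x', y'⟩ hadj hcol
    obtain ⟨hfx, hgy⟩ := Sigma.mk.inj_iff.mp hcol
    rcases lexProd_adj.mp hadj with hG | ⟨rfl, hH⟩
    · exact hf.1 x x' hG hfx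
    · exact (hg (f x)).1 y y' hH (eq_of_heq hgy)
  · rintro ⟨x, y⟩ ⟨i, c⟩
    obtain ⟨x', hx', rfl⟩ := hf.2 x i
    obtain ⟨y', hy', rfl⟩ := (hg (f x')).2 y c
    refine ⟨(x', y'), ?_, rfl⟩
    rcases hx' with rfl | hG
    · rcases hy' with rfl | hH
      · exact Or.inl rfl
      · exact Or.inr (lexProd_adj.mpr (Or.inr ⟨rfl, hH⟩))
    · exact Or.inr (lexProd_adj.mpr (Or.inl hG))

theorem sum_mem_fall_lexProd_general {α β : Type*} (G : SimpleGraph α) (H : SimpleGraph β)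
    (s : ℕ) (hs : s ∈ Fall G) (k : Fin s → ℕ) (hk : ∀ i, k i ∈ Fall H) :
    (∑ i, k i) ∈ Fall (lexProd G H) := by
  obtain ⟨hs_pos, f, hf⟩ := hs
  choose g hg using fun i => (hk i).2
  have hsum_pos : 0 < ∑ i, k i :=
    (hk ⟨0, hs_pos⟩).1.trans_le (Finset.single_le_sum (fun _ _ => Nat.zero_le _)
      (Finset.mem_univ _))
  let e : (Σ i, Fin (k i)) ≃ Fin (∑ i, k i) := Fintype.equivFinOfCardEq (by simp)
  exact ⟨hsum_pos, _, (IsFallMap.lexProd_sigma hf hg).equiv_comp e⟩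

/-- sums of fall colorings lift to the lexicographic product. -/
theorem sum_mem_fall_lexProd {α β : Type*} (G : SimpleGraph α) (H : SimpleGraph β)
    (hG : (Fall G).Nonempty) (hH : (Fall H).Nonempty)
    (s : ℕ) (hs : s ∈ Fall G) (k : Fin s → ℕ) (hk : ∀ i, k i ∈ Fall H) :
    (∑ i, k i) ∈ Fall (lexProd G H) :=
  sum_mem_fall_lexProd_general G H s hs k hk
end
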